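/- arXiv:math/0405040 — 3 statements merged into one kernel-verified Lean document; each statement's English description precedes it below -/
import Mathlib

section
/- In K_2(F) of any field F, if a, 1-a, and 1-2a are all nonzero, then {a/(1-a), a(a-1)/(1-2a)²} = {((1-a)/a)², 1 - ((1-a)/a)²} - {a/(1-a), -a/(1-a)} - 2{a,-a} + 2{1-a, a}; in particular this element vanishes in K_2(F). -/
open TensorProduct

/-- The subgroup of `Fˣ ⊗ℤ Fˣ` generated by the Steinberg elements `a ⊗ (1-a)`. -/
noncomputable def K2Rel (F : Type*) [Field F] :
    Submodule ℤ (TensorProduct ℤ (Additive Fˣ) (Additive Fˣ)) :=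
  Submodule.span ℤ { x | ∃ (a : F) (ha : a ≠ 0) (ha1 : a ≠ 1),
    x = Additive.ofMul (Units.mk0 a ha) ⊗ₜ[ℤ]
        Additive.ofMul (Units.mk0 (1 - a) (sub_ne_zero.mpr (Ne.symm ha1))) }

/-- `K₂(F) = F^* ⊗ℤ F^* / ⟨a ⊗ (1-a)⟩`. -/
noncomputable abbrev K2 (F : Type*) [Field F] :=
  TensorProduct ℤ (Additive Fˣ) (Additive Fˣ) ⧸ K2Rel F

/-- The symbol `{a, b}` in `K₂(F)`. -/
noncomputable def K2sym {F : Type*} [Field F] (a b : Fˣ) : K2 F :=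
  Submodule.Quotient.mk (Additive.ofMul a ⊗ₜ[ℤ] Additive.ofMul b)

lemma one_sub_sq_ne_zero {F : Type*} [Field F] {a : F} (ha : a ≠ 0)
    (h2a : 1 - 2 * a ≠ 0) : 1 - ((1 - a) / a) ^ 2 ≠ 0 := by
  intro h
  apply h2a
  have h' : a ^ 2 - (1 - a) ^ 2 = 0 := by
    field_simp at h
    linear_combination h
  linear_combination -h'

/-! With `u = a/(1-a)` one has `1 - u = (1-2a)/(1-a)` and `a(a-1)/(1-2a)² = -u/(1-u)²`, so the
left side is `{u, -u} - 2{u, 1-u} = 0`. Every symbol on the right is a Steinberg symbol or of the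
form `{x, -x}`, and `{x, -x} = {x, 1-x} - {x, 1-x⁻¹} = 0` because `-x = (1-x)/(1-x⁻¹)`. -/

namespace K2sym

variable {F : Type*} [Field F]

lemma mul_right (a b c : Fˣ) : K2sym a (b * c) = K2sym a b + K2sym a c := by
  simp only [K2sym, ofMul_mul, tmul_add, Submodule.Quotient.mk_add]

lemma one_left (b : Fˣ) : K2sym 1 b = 0 := by
  simp only [K2sym, ofMul_one, zero_tmul, Submodule.Quotient.mk_zero]

lemma inv_left (a b : Fˣ) : K2sym a⁻¹ b = -K2sym a b := by
  simp only [K2sym, ofMul_inv, neg_tmul, Submodule.Quotient.mk_neg]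

lemma inv_right (a b : Fˣ) : K2sym a b⁻¹ = -K2sym a b := by
  simp only [K2sym, ofMul_inv, tmul_neg, Submodule.Quotient.mk_neg]

lemma pow_right (a b : Fˣ) (n : ℕ) : K2sym a (b ^ n) = n • K2sym a b := by
  simp only [K2sym, ofMul_pow, tmul_smul]
  exact map_nsmul (K2Rel F).mkQ n _

lemma eq_zero_of_add_eq_one {u v : Fˣ} (h : (u : F) + v = 1) : K2sym u v = 0 := by
  have hu : (u : F) ≠ 1 := fun hu => v.ne_zero (by linear_combination h - hu)
  refine (Submodule.Quotient.mk_eq_zero _).mpr (Submodule.subset_span ⟨u, u.ne_zero, hu, ?_⟩)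
  congr <;> ext <;> simp [eq_sub_of_add_eq' h]

lemma self_neg_eq_zero (a : Fˣ) : K2sym a (-a) = 0 := by
  by_cases ha : (a : F) = 1
  · obtain rfl : a = 1 := Units.ext ha
    exact one_left _
  have ha' : ((a⁻¹ : Fˣ) : F) ≠ 1 := by simpa using ha
  set b := Units.mk0 (1 - (a : F)) (sub_ne_zero.mpr (Ne.symm ha))
  set c := Units.mk0 (1 - ((a⁻¹ : Fˣ) : F)) (sub_ne_zero.mpr (Ne.symm ha'))
  have hb : K2sym a b = 0 := eq_zero_of_add_eq_one (by simp [b])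
  have hc : K2sym a c = 0 := by
    rw [← neg_eq_zero, ← inv_left]
    exact eq_zero_of_add_eq_one (by simp [c])
  have hneg : -a = b / c := by
    have h0 : (a : F) - 1 ≠ 0 := sub_ne_zero.mpr ha
    ext
    simp only [Units.val_neg, Units.val_inv_eq_inv_val, Units.val_div_eq_div_val, Units.val_mk0,
      b, c]
    field_simp
    ring
  rw [hneg, div_eq_mul_inv, mul_right, inv_right, hb, hc, neg_zero, add_zero]

lemma neg_div_sq_eq_zero {u v : Fˣ} (h : (u : F) + v = 1) : K2sym u (-u / v ^ 2) = 0 := by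
  rw [div_eq_mul_inv, mul_right, inv_right, pow_right, self_neg_eq_zero, eq_zero_of_add_eq_one h]
  simp

end K2sym

theorem K2_dilog_identity {F : Type*} [Field F] (a : F) (ha : a ≠ 0)
    (h1a : 1 - a ≠ 0) (h2a : 1 - 2 * a ≠ 0) :
    K2sym (Units.mk0 (a / (1 - a)) (div_ne_zero ha h1a))
        (Units.mk0 (a * (a - 1) / (1 - 2 * a) ^ 2)
          (div_ne_zero (mul_ne_zero ha (fun h => h1a (by linear_combination -h)))
            (pow_ne_zero 2 h2a)))
      = K2sym (Units.mk0 (((1 - a) / a) ^ 2) (pow_ne_zero 2 (div_ne_zero h1a ha)))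
            (Units.mk0 (1 - ((1 - a) / a) ^ 2) (one_sub_sq_ne_zero ha h2a))
        - K2sym (Units.mk0 (a / (1 - a)) (div_ne_zero ha h1a))
            (-(Units.mk0 (a / (1 - a)) (div_ne_zero ha h1a)))
        - 2 • K2sym (Units.mk0 a ha) (-(Units.mk0 a ha))
        + 2 • K2sym (Units.mk0 (1 - a) h1a) (Units.mk0 a ha) ∧
    K2sym (Units.mk0 (a / (1 - a)) (div_ne_zero ha h1a))
        (Units.mk0 (a * (a - 1) / (1 - 2 * a) ^ 2)
          (div_ne_zero (mul_ne_zero ha (fun h => h1a (by linear_combination -h)))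
            (pow_ne_zero 2 h2a)))
      = 0 := by
  set u := Units.mk0 (a / (1 - a)) (div_ne_zero ha h1a)
  set v := Units.mk0 ((1 - 2 * a) / (1 - a)) (div_ne_zero h2a h1a)
  have huv : (u : F) + v = 1 := by
    simp only [u, v, Units.val_mk0]
    field_simp
    ring
  have hlhs : ∀ b : Fˣ, (b : F) = a * (a - 1) / (1 - 2 * a) ^ 2 → K2sym u b = 0 := by
    intro b hb
    have hb' : b = -u / v ^ 2 := by
      ext
      simp only [hb, Units.val_div_eq_div_val, Units.val_neg, Units.val_mk0,
        Units.val_pow_eq_pow_val, u, v]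
      field_simp
      ring
    rw [hb']
    exact K2sym.neg_div_sq_eq_zero huv
  refine ⟨?_, hlhs _ (Units.val_mk0 _)⟩
  rw [hlhs _ (Units.val_mk0 _), K2sym.eq_zero_of_add_eq_one (by simp), K2sym.self_neg_eq_zero,
    K2sym.self_neg_eq_zero, K2sym.eq_zero_of_add_eq_one (by simp)]
  simp
end

section
/- Let A be an abelian group and a, b, c ∈ A with a + b + c = 0, having finite orders m₁, m₂, m₃ respectively. Then lcm(m₁,m₂) = lcm(m₂,m₃) = lcm(m₁,m₃), and writing L for this common value, the integers L/m₁, L/m₂, L/m₃ are pairwise coprime. -/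
private lemma lcm_div_left_eq (m n : ℕ) (hm : m ≠ 0) :
    Nat.lcm m n / m = n / Nat.gcd m n := by
  have hg : 0 < Nat.gcd m n := Nat.gcd_pos_of_pos_left n (Nat.pos_of_ne_zero hm)
  apply Nat.div_eq_of_eq_mul_left (Nat.pos_of_ne_zero hm)
  apply Nat.eq_of_mul_eq_mul_right hg
  have h1 : Nat.gcd m n * Nat.lcm m n = m * n := Nat.gcd_mul_lcm m n
  have h2 : n / Nat.gcd m n * Nat.gcd m n = n := Nat.div_mul_cancel (Nat.gcd_dvd_right m n)
  calc Nat.lcm m n * Nat.gcd m n = Nat.gcd m n * Nat.lcm m n := by ring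
    _ = m * n := h1
    _ = n / Nat.gcd m n * Nat.gcd m n * m := by rw [h2]; ring
    _ = n / Nat.gcd m n * m * Nat.gcd m n := by ring

private lemma lcm_div_coprime (m n : ℕ) (hm : m ≠ 0) (hn : n ≠ 0) :
    Nat.Coprime (Nat.lcm m n / m) (Nat.lcm m n / n) := by
  rw [lcm_div_left_eq m n hm, Nat.lcm_comm, lcm_div_left_eq n m hn, Nat.gcd_comm n m]
  have hg : 0 < Nat.gcd m n := Nat.gcd_pos_of_pos_left n (Nat.pos_of_ne_zero hm)
  exact (Nat.coprime_div_gcd_div_gcd hg).symm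

/-- If `a + b + c = 0` in an abelian group and `a, b, c` have finite orders
`m₁, m₂, m₃`, then the three pairwise lcm's of the orders coincide, and the
quotients `L/mᵢ` of the common value `L` by the orders are pairwise coprime. -/
theorem lcm_orders_of_sum_zero {A : Type*} [AddCommGroup A] (a b c : A)
    (habc : a + b + c = 0)
    (ha : IsOfFinAddOrder a) (hb : IsOfFinAddOrder b) (hc : IsOfFinAddOrder c) :
    Nat.lcm (addOrderOf a) (addOrderOf b) = Nat.lcm (addOrderOf b) (addOrderOf c) ∧
    Nat.lcm (addOrderOf a) (addOrderOf b) = Nat.lcm (addOrderOf a) (addOrderOf c) ∧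
    (Nat.Coprime (Nat.lcm (addOrderOf a) (addOrderOf b) / addOrderOf a)
       (Nat.lcm (addOrderOf a) (addOrderOf b) / addOrderOf b) ∧
     Nat.Coprime (Nat.lcm (addOrderOf a) (addOrderOf b) / addOrderOf a)
       (Nat.lcm (addOrderOf a) (addOrderOf b) / addOrderOf c) ∧
     Nat.Coprime (Nat.lcm (addOrderOf a) (addOrderOf b) / addOrderOf b)
       (Nat.lcm (addOrderOf a) (addOrderOf b) / addOrderOf c)) := by
  set m₁ := addOrderOf a
  set m₂ := addOrderOf b
  set m₃ := addOrderOf c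
  have hm₁ : m₁ ≠ 0 := ha.addOrderOf_pos.ne'
  have hm₂ : m₂ ≠ 0 := hb.addOrderOf_pos.ne'
  have hm₃ : m₃ ≠ 0 := hc.addOrderOf_pos.ne'
  -- key divisibility: if x + y + z = 0 then ord z ∣ lcm (ord x) (ord y)
  have key : ∀ x y z : A, x + y + z = 0 →
      addOrderOf z ∣ Nat.lcm (addOrderOf x) (addOrderOf y) := by
    intro x y z h
    rw [addOrderOf_dvd_iff_nsmul_eq_zero]
    have hz : z = -(x + y) := by linear_combination (norm := abel_nf) h
    have hx : Nat.lcm (addOrderOf x) (addOrderOf y) • x = 0 :=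
      addOrderOf_dvd_iff_nsmul_eq_zero.mp (Nat.dvd_lcm_left _ _)
    have hy : Nat.lcm (addOrderOf x) (addOrderOf y) • y = 0 :=
      addOrderOf_dvd_iff_nsmul_eq_zero.mp (Nat.dvd_lcm_right _ _)
    rw [hz, smul_neg, smul_add, hx, hy]
    simp
  have h3 : m₃ ∣ Nat.lcm m₁ m₂ := key a b c habc
  have h1 : m₁ ∣ Nat.lcm m₂ m₃ := key b c a (by linear_combination (norm := abel_nf) habc)
  have h2 : m₂ ∣ Nat.lcm m₁ m₃ := key a c b (by linear_combination (norm := abel_nf) habc)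
  have e1 : Nat.lcm m₁ m₂ = Nat.lcm m₂ m₃ := by
    apply Nat.dvd_antisymm
    · exact Nat.lcm_dvd h1 (Nat.dvd_lcm_left _ _)
    · exact Nat.lcm_dvd (Nat.dvd_lcm_right _ _) h3
  have e2 : Nat.lcm m₁ m₂ = Nat.lcm m₁ m₃ := by
    apply Nat.dvd_antisymm
    · exact Nat.lcm_dvd (Nat.dvd_lcm_left _ _) h2
    · exact Nat.lcm_dvd (Nat.dvd_lcm_left _ _) h3
  refine ⟨e1, e2, lcm_div_coprime m₁ m₂ hm₁ hm₂, ?_, ?_⟩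
  · rw [e2]; exact lcm_div_coprime m₁ m₃ hm₁ hm₃
  · rw [e1]; exact lcm_div_coprime m₂ m₃ hm₂ hm₃
end

section
/- Let ν : {1,2,3,4} × {1,2,3,4} → ℤ≥0 be symmetric (ν_{ij} = ν_{ji}, defined for i ≠ j) with the property that for every 3-element subset {i,j,k}, the two largest among ν_{ij}, ν_{jk}, ν_{ik} are equal. Define γ_i = min_{j≠i} ν_{ij} and γ'_i = max_{j,k≠i} ν_{jk} - Σ_{j<k, j,k≠i} ν_{jk}. Then γ_i - γ'_i is independent of i; in fact γ_i - γ'_i = a + b + c where the label multiset is as classified in the two cases (three incident edges equal, or four edges equal). -/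
open Finset

/-- `γᵢ = min_{j ≠ i} ν_{ij}`. -/
noncomputable def gam (ν : Fin 4 → Fin 4 → ℤ) (i : Fin 4) : ℤ :=
  (Finset.univ.erase i).inf'
    (by
      refine ⟨i + 1, Finset.mem_erase.mpr ⟨?_, Finset.mem_univ _⟩⟩
      have h4 : (i : ℕ) < 4 := i.isLt
      simp only [Ne, Fin.ext_iff, Fin.val_add, Fin.val_one]
      omega)
    (ν i)

/-- `γ'ᵢ = max_{j,k ≠ i, j ≠ k} ν_{jk} - Σ_{j<k, j,k ≠ i} ν_{jk}`. -/
noncomputable def gam' (ν : Fin 4 → Fin 4 → ℤ) (i : Fin 4) : ℤ :=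
  (((Finset.univ.erase i) ×ˢ (Finset.univ.erase i)).filter
      (fun p => p.1 ≠ p.2)).sup'
    (by
      refine ⟨(i + 1, i + 1 + 1), ?_⟩
      have h4 : (i : ℕ) < 4 := i.isLt
      simp only [Finset.mem_filter, Finset.mem_product, Finset.mem_erase,
        Finset.mem_univ, and_true, Ne, Fin.ext_iff, Fin.val_add, Fin.val_one]
      omega)
    (fun p => ν p.1 p.2)
  - ∑ p ∈ ((Finset.univ.erase i) ×ˢ (Finset.univ.erase i)).filter
      (fun p => p.1 < p.2), ν p.1 p.2

private lemma tetra_aux1 (a b c d e f : ℤ)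
    (h1a : max a d = max a b) (h1b : max d b = max a b)
    (h2a : max a e = max a c) (h2b : max e c = max a c)
    (h3a : max b f = max b c) (h3b : max f c = max b c)
    (h4a : max d f = max d e) (h4b : max f e = max d e) :
    min a (min d e) - (max b (max c f) - (b + c + f)) =
    min a (min b c) - (max d (max e f) - (d + e + f)) := by
  omega

private lemma tetra_aux2 (a b c d e f : ℤ)
    (h1a : max a d = max a b) (h1b : max d b = max a b)
    (h2a : max a e = max a c) (h2b : max e c = max a c)
    (h3a : max b f = max b c) (h3b : max f c = max b c)
    (h4a : max d f = max d e) (h4b : max f e = max d e) :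
    min b (min d f) - (max a (max c e) - (a + c + e)) =
    min a (min b c) - (max d (max e f) - (d + e + f)) := by
  omega

private lemma tetra_aux3 (a b c d e f : ℤ)
    (h1a : max a d = max a b) (h1b : max d b = max a b)
    (h2a : max a e = max a c) (h2b : max e c = max a c)
    (h3a : max b f = max b c) (h3b : max f c = max b c)
    (h4a : max d f = max d e) (h4b : max f e = max d e) :
    min c (min e f) - (max a (max b d) - (a + b + d)) =
    min a (min b c) - (max d (max e f) - (d + e + f)) := by
  omega

/-- If on each face of the tetrahedron the two largest edge labels coincide
(equivalently, all three pairwise maxima of the face labels agree), then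
`γᵢ - γ'ᵢ` is independent of `i`. -/
theorem tetrahedron_gamma_difference_constant (ν : Fin 4 → Fin 4 → ℤ)
    (hpos : ∀ i j, i ≠ j → 0 ≤ ν i j)
    (hsym : ∀ i j, ν i j = ν j i)
    (hface : ∀ i j k : Fin 4, i ≠ j → j ≠ k → i ≠ k →
      max (ν i j) (ν j k) = max (ν i j) (ν i k) ∧
      max (ν j k) (ν i k) = max (ν i j) (ν i k)) :
    ∀ i i' : Fin 4, gam ν i - gam' ν i = gam ν i' - gam' ν i' := by
  have e10 := hsym 1 0
  have e20 := hsym 2 0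
  have e30 := hsym 3 0
  have e21 := hsym 2 1
  have e31 := hsym 3 1
  have e32 := hsym 3 2
  have hg0 : gam ν 0 = min (ν 0 1) (min (ν 0 2) (ν 0 3)) := by
    rw [gam]
    simp only [show (Finset.univ.erase (0:Fin 4)) = {1,2,3} from by decide]
    simp [Finset.inf'_insert, min_assoc]
  have hs0 : gam' ν 0 = max (ν 1 2) (max (ν 1 3) (ν 2 3)) - (ν 1 2 + ν 1 3 + ν 2 3) := by
    rw [gam']
    simp only [show ((Finset.univ.erase (0:Fin 4)) ×ˢ (Finset.univ.erase (0:Fin 4))).filter (fun p => p.1 ≠ p.2) = {(1,2),(1,3),(2,1),(2,3),(3,1),(3,2)} from by decide,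
      show ((Finset.univ.erase (0:Fin 4)) ×ˢ (Finset.univ.erase (0:Fin 4))).filter (fun p => p.1 < p.2) = {(1,2),(1,3),(2,3)} from by decide]
    simp [Finset.sup'_insert, Finset.sum_insert, max_assoc]
    omega
  have hg1 : gam ν 1 = min (ν 1 0) (min (ν 1 2) (ν 1 3)) := by
    rw [gam]
    simp only [show (Finset.univ.erase (1:Fin 4)) = {0,2,3} from by decide]
    simp [Finset.inf'_insert, min_assoc]
  have hs1 : gam' ν 1 = max (ν 0 2) (max (ν 0 3) (ν 2 3)) - (ν 0 2 + ν 0 3 + ν 2 3) := by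
    rw [gam']
    simp only [show ((Finset.univ.erase (1:Fin 4)) ×ˢ (Finset.univ.erase (1:Fin 4))).filter (fun p => p.1 ≠ p.2) = {(0,2),(0,3),(2,0),(2,3),(3,0),(3,2)} from by decide,
      show ((Finset.univ.erase (1:Fin 4)) ×ˢ (Finset.univ.erase (1:Fin 4))).filter (fun p => p.1 < p.2) = {(0,2),(0,3),(2,3)} from by decide]
    simp [Finset.sup'_insert, Finset.sum_insert, max_assoc]
    omega
  have hg2 : gam ν 2 = min (ν 2 0) (min (ν 2 1) (ν 2 3)) := by
    rw [gam]
    simp only [show (Finset.univ.erase (2:Fin 4)) = {0,1,3} from by decide]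
    simp [Finset.inf'_insert, min_assoc]
  have hs2 : gam' ν 2 = max (ν 0 1) (max (ν 0 3) (ν 1 3)) - (ν 0 1 + ν 0 3 + ν 1 3) := by
    rw [gam']
    simp only [show ((Finset.univ.erase (2:Fin 4)) ×ˢ (Finset.univ.erase (2:Fin 4))).filter (fun p => p.1 ≠ p.2) = {(0,1),(0,3),(1,0),(1,3),(3,0),(3,1)} from by decide,
      show ((Finset.univ.erase (2:Fin 4)) ×ˢ (Finset.univ.erase (2:Fin 4))).filter (fun p => p.1 < p.2) = {(0,1),(0,3),(1,3)} from by decide]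
    simp [Finset.sup'_insert, Finset.sum_insert, max_assoc]
    omega
  have hg3 : gam ν 3 = min (ν 3 0) (min (ν 3 1) (ν 3 2)) := by
    rw [gam]
    simp only [show (Finset.univ.erase (3:Fin 4)) = {0,1,2} from by decide]
    simp [Finset.inf'_insert, min_assoc]
  have hs3 : gam' ν 3 = max (ν 0 1) (max (ν 0 2) (ν 1 2)) - (ν 0 1 + ν 0 2 + ν 1 2) := by
    rw [gam']
    simp only [show ((Finset.univ.erase (3:Fin 4)) ×ˢ (Finset.univ.erase (3:Fin 4))).filter (fun p => p.1 ≠ p.2) = {(0,1),(0,2),(1,0),(1,2),(2,0),(2,1)} from by decide,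
      show ((Finset.univ.erase (3:Fin 4)) ×ˢ (Finset.univ.erase (3:Fin 4))).filter (fun p => p.1 < p.2) = {(0,1),(0,2),(1,2)} from by decide]
    simp [Finset.sup'_insert, Finset.sum_insert, max_assoc]
    omega
  obtain ⟨fa1, fb1⟩ := hface 0 1 2 (by decide) (by decide) (by decide)
  obtain ⟨fa2, fb2⟩ := hface 0 1 3 (by decide) (by decide) (by decide)
  obtain ⟨fa3, fb3⟩ := hface 0 2 3 (by decide) (by decide) (by decide)
  obtain ⟨fa4, fb4⟩ := hface 1 2 3 (by decide) (by decide) (by decide)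
  have k1 : gam ν 1 - gam' ν 1 = gam ν 0 - gam' ν 0 := by
    rw [hg0, hg1, hs0, hs1]
    -- rewrite ν 1 0 → ν 0 1
    rw [e10]
    exact tetra_aux1 _ _ _ _ _ _ fa1 fb1 fa2 fb2 fa3 fb3 fa4 fb4
  have k2 : gam ν 2 - gam' ν 2 = gam ν 0 - gam' ν 0 := by
    rw [hg0, hg2, hs0, hs2, e20, e21]
    exact tetra_aux2 _ _ _ _ _ _ fa1 fb1 fa2 fb2 fa3 fb3 fa4 fb4
  have k3 : gam ν 3 - gam' ν 3 = gam ν 0 - gam' ν 0 := by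
    rw [hg0, hg3, hs0, hs3, e30, e31, e32]
    exact tetra_aux3 _ _ _ _ _ _ fa1 fb1 fa2 fb2 fa3 fb3 fa4 fb4
  have key : ∀ j : Fin 4, gam ν j - gam' ν j = gam ν 0 - gam' ν 0 := by
    intro j
    fin_cases j
    · rfl
    · exact k1
    · exact k2
    · exact k3
  intro i i'
  rw [key i, key i']
end
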